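/- arXiv:1308.6689 — 4 statements merged into one kernel-verified Lean document; each statement's English description precedes it below -/
import Mathlib

section
/- Let G be a nontrivial connected graph of order n. Then the local metric dimension of G equals 1 if and only if G is bipartite. -/
open SimpleGraph

/-- A set `S` is a local metric generator for `G` if every pair of adjacent
vertices is distinguished (by distance) by some element of `S`. -/
def IsLocalMetricGenerator {α : Type*} (G : SimpleGraph α) (S : Set α) : Prop :=
  ∀ x y : α, G.Adj x y → ∃ v ∈ S, G.dist v x ≠ G.dist v y

/-- The local metric dimension of a graph. -/
noncomputable def localMetricDim {α : Type*} (G : SimpleGraph α) : ℕ :=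
  sInf {k | ∃ S : Finset α, S.card = k ∧ IsLocalMetricGenerator G ↑S}

/-- A local metric basis: a minimum-cardinality local metric generator. -/
def IsLocalMetricBasis {α : Type*} (G : SimpleGraph α) (S : Finset α) : Prop :=
  IsLocalMetricGenerator G ↑S ∧ S.card = localMetricDim G

/-- The corona product `G ⊙ H`. -/
def corona {α β : Type*} (G : SimpleGraph α) (H : SimpleGraph β) :
    SimpleGraph (α ⊕ α × β) :=
  SimpleGraph.fromRel (fun x y => match x, y with
    | Sum.inl a, Sum.inl a' => G.Adj a a'
    | Sum.inl a, Sum.inr p => a = p.1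
    | Sum.inr p, Sum.inl a => a = p.1
    | Sum.inr p, Sum.inr q => p.1 = q.1 ∧ H.Adj p.2 q.2)

/-- The join `K₁ + H`; the vertex of `K₁` is `none`. -/
def joinK1 {β : Type*} (H : SimpleGraph β) : SimpleGraph (Option β) :=
  SimpleGraph.fromRel (fun x y => match x, y with
    | none, some _ => True
    | some b, some b' => H.Adj b b'
    | _, _ => False)

/-- Eccentricity of a vertex (in `ℕ∞`). -/
noncomputable def ecc {α : Type*} (G : SimpleGraph α) (x : α) : ℕ∞ :=
  ⨆ y, G.edist x y

/-- Radius of a graph (in `ℕ∞`). -/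
noncomputable def gradius {α : Type*} (G : SimpleGraph α) : ℕ∞ :=
  ⨅ x, ecc G x

/-- Diameter of a graph (in `ℕ∞`). -/
noncomputable def gdiam {α : Type*} (G : SimpleGraph α) : ℕ∞ :=
  ⨆ x, ecc G x

/-!
Adjacent vertices lie at distances from any vertex `v` that differ by at most one, so if a
single vertex `v` distinguishes the ends of every edge, the parity of `dist v ·` is a proper
2-colouring. Conversely, in a connected bipartite graph two shortest paths from `v` to the ends of
an edge close up with that edge into a closed walk, which must have even length; hence the two
distances have different parities. Since a nontrivial connected graph has an edge, the empty set
is not a local metric generator, so the local metric dimension is `1` exactly when some singleton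
is one.
-/

namespace SimpleGraph

variable {α : Type*} {G : SimpleGraph α}

theorem colorable_two_of_forall_adj_dist_ne (v : α)
    (h : ∀ x y, G.Adj x y → G.dist v x ≠ G.dist v y) : G.Colorable 2 :=
  ⟨Coloring.mk (fun x => (G.dist v x : ZMod 2)) fun {x y} hxy => by
    have hsucc : G.dist v y = G.dist v x + 1 ∨ G.dist v x = G.dist v y + 1 := by
      have := h x y hxy
      rcases hxy.diff_dist_adj (u := v) with hd | hd | hd <;> omega
    rcases hsucc with hd | hd <;> rw [hd, Nat.cast_succ]
    · exact (add_ne_left.mpr one_ne_zero).symm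
    · exact add_ne_left.mpr one_ne_zero⟩

theorem Preconnected.dist_ne_of_adj_of_colorable_two (hG : G.Preconnected) (hc : G.Colorable 2)
    (v : α) {x y : α} (hxy : G.Adj x y) : G.dist v x ≠ G.dist v y := by
  obtain ⟨p, hp⟩ := (hG v x).exists_walk_length_eq_dist
  obtain ⟨q, hq⟩ := (hG v y).exists_walk_length_eq_dist
  have heven := two_colorable_iff_forall_loop_even.mp hc v (p.append (Walk.cons hxy q.reverse))
  simp only [Walk.length_append, Walk.length_cons, Walk.length_reverse, hp, hq] at heven
  intro heq
  rw [heq] at heven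
  exact Nat.not_even_iff_odd.mpr ⟨G.dist v y, by ring⟩ heven

end SimpleGraph

section LocalMetricDim

variable {α : Type*} {G : SimpleGraph α}

theorem isLocalMetricGenerator_univ (G : SimpleGraph α) : IsLocalMetricGenerator G Set.univ :=
  fun x y hxy =>
    ⟨x, Set.mem_univ x, by rw [dist_self, dist_eq_one_iff_adj.mpr hxy]; exact zero_ne_one⟩

theorem isLocalMetricGenerator_empty_iff : IsLocalMetricGenerator G ∅ ↔ G = ⊥ := by
  simp [IsLocalMetricGenerator, eq_bot_iff_forall_not_adj]

theorem isLocalMetricGenerator_singleton_iff {v : α} :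
    IsLocalMetricGenerator G {v} ↔ ∀ x y, G.Adj x y → G.dist v x ≠ G.dist v y := by
  simp [IsLocalMetricGenerator]

theorem localMetricDim_le_card {S : Finset α} (hS : IsLocalMetricGenerator G S) :
    localMetricDim G ≤ S.card :=
  Nat.sInf_le ⟨S, rfl, hS⟩

theorem exists_isLocalMetricBasis [Fintype α] (G : SimpleGraph α) :
    ∃ S, IsLocalMetricBasis G S := by
  have hne : {k | ∃ S : Finset α, S.card = k ∧ IsLocalMetricGenerator G ↑S}.Nonempty :=
    ⟨_, Finset.univ, rfl, by simpa using isLocalMetricGenerator_univ G⟩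
  obtain ⟨S, hcard, hS⟩ := Nat.sInf_mem hne
  exact ⟨S, hS, hcard⟩

theorem localMetricDim_eq_zero_iff [Fintype α] : localMetricDim G = 0 ↔ G = ⊥ := by
  constructor
  · intro hdim
    obtain ⟨S, hS, hcard⟩ := exists_isLocalMetricBasis G
    rw [hdim, Finset.card_eq_zero] at hcard
    subst hcard
    exact isLocalMetricGenerator_empty_iff.mp (by simpa using hS)
  · rintro rfl
    have hempty : IsLocalMetricGenerator (⊥ : SimpleGraph α) ↑(∅ : Finset α) := by
      simpa using isLocalMetricGenerator_empty_iff.mpr rfl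
    exact Nat.le_zero.mp (localMetricDim_le_card hempty)

theorem localMetricDim_eq_one_iff [Fintype α] (hG : G ≠ ⊥) :
    localMetricDim G = 1 ↔ ∃ v, IsLocalMetricGenerator G {v} := by
  constructor
  · intro hdim
    obtain ⟨S, hS, hcard⟩ := exists_isLocalMetricBasis G
    obtain ⟨v, rfl⟩ := Finset.card_eq_one.mp (hcard.trans hdim)
    exact ⟨v, by simpa using hS⟩
  · rintro ⟨v, hv⟩
    have hle : localMetricDim G ≤ 1 := by
      simpa using localMetricDim_le_card (S := {v}) (by simpa using hv)
    have hpos : localMetricDim G ≠ 0 := localMetricDim_eq_zero_iff.not.mpr hG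
    omega

end LocalMetricDim

/-- For a nontrivial connected graph `G`, `dim_l G = 1` iff `G` is bipartite. -/
theorem stmt0 {α : Type*} [Fintype α] (G : SimpleGraph α) (hG : G.Connected)
    (hnt : Nontrivial α) :
    localMetricDim G = 1 ↔ G.Colorable 2 := by
  have hbot : G ≠ ⊥ := fun h => not_connected_bot (h ▸ hG)
  simp only [localMetricDim_eq_one_iff hbot, isLocalMetricGenerator_singleton_iff]
  constructor
  · rintro ⟨v, hv⟩
    exact colorable_two_of_forall_adj_dist_ne v hv
  · intro hc
    exact ⟨hG.nonempty.some, fun x y hxy =>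
      hG.preconnected.dist_ne_of_adj_of_colorable_two hc _ hxy⟩
end

section
/- Let G be a nontrivial connected graph of order n. Then dim_l(G) = n − 1 if and only if G is the complete graph K_n. -/
/-!
A vertex is at distance `0` from itself and at distance `1` from its neighbours, so every set
meeting all edges is a local metric generator. If `G ≠ K_n`, two distinct vertices `u, v` are
non-adjacent and `V ∖ {u, v}` is such a set, so `dim_l G ≤ n - 2`. In `K_n` every vertex other
than `u, v` is at distance `1` from both, so a local metric generator misses at most one vertex.
-/

open SimpleGraph

open Finset

section

variable {α : Type*}

theorem isLocalMetricGenerator_of_forall_adj_mem (G : SimpleGraph α) {S : Set α}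
    (hS : ∀ x y, G.Adj x y → x ∈ S ∨ y ∈ S) : IsLocalMetricGenerator G S := by
  intro x y hxy
  rcases hS x y hxy with hx | hy
  · exact ⟨x, hx, by simp [dist_eq_one_iff_adj.mpr hxy]⟩
  · exact ⟨y, hy, by simp [dist_comm, dist_eq_one_iff_adj.mpr hxy]⟩

theorem isLocalMetricGenerator_top_iff {S : Set α} :
    IsLocalMetricGenerator (⊤ : SimpleGraph α) S ↔ Sᶜ.Subsingleton := by
  constructor
  · intro hS u hu v hv
    by_contra huv
    obtain ⟨w, hw, hdist⟩ := hS u v huv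
    have hwu : w ≠ u := fun h => hu (h ▸ hw)
    have hwv : w ≠ v := fun h => hv (h ▸ hw)
    exact hdist <| by rw [dist_eq_one_iff_adj.mpr hwu, dist_eq_one_iff_adj.mpr hwv]
  · intro hS
    refine isLocalMetricGenerator_of_forall_adj_mem _ fun x y hxy => ?_
    by_contra! h
    exact hxy (hS h.1 h.2)

theorem localMetricDim_le {G : SimpleGraph α} {S : Finset α}
    (hS : IsLocalMetricGenerator G ↑S) : localMetricDim G ≤ #S :=
  Nat.sInf_le ⟨S, rfl, hS⟩

variable [Fintype α]

theorem localMetricDim_top : localMetricDim (⊤ : SimpleGraph α) = Fintype.card α - 1 := by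
  classical
  have generator_iff (S : Finset α) :
      IsLocalMetricGenerator (⊤ : SimpleGraph α) ↑S ↔ Fintype.card α - 1 ≤ #S := by
    rw [isLocalMetricGenerator_top_iff, ← coe_compl, ← card_le_one_iff_subsingleton,
      card_compl]
    omega
  obtain ⟨S, -, hS⟩ := exists_subset_card_eq (s := (univ : Finset α)) (n := Fintype.card α - 1)
    (by simp only [card_univ]; omega)
  refine le_antisymm (hS ▸ localMetricDim_le ((generator_iff S).mpr hS.ge)) ?_
  refine le_csInf ⟨_, S, rfl, (generator_iff S).mpr hS.ge⟩ ?_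
  rintro k ⟨T, rfl, hT⟩
  exact (generator_iff T).mp hT

theorem localMetricDim_lt_card_sub_one_of_ne_top {G : SimpleGraph α} (hG : G ≠ ⊤) :
    localMetricDim G < Fintype.card α - 1 := by
  classical
  obtain ⟨u, v, huv, hnadj⟩ := ne_top_iff_exists_not_adj.mp hG
  have hpair : #{u, v} = 2 := card_pair huv
  have hcard : 2 ≤ Fintype.card α := hpair ▸ card_le_univ _
  have hgen : IsLocalMetricGenerator G ↑(univ \ {u, v}) := by
    refine isLocalMetricGenerator_of_forall_adj_mem G fun x y hxy => ?_
    by_contra! h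
    simp only [coe_sdiff, coe_univ, Set.mem_sdiff, Set.mem_univ, true_and, not_not, coe_insert,
      coe_singleton, Set.mem_insert_iff, Set.mem_singleton_iff] at h
    obtain ⟨rfl | rfl, rfl | rfl⟩ := h
    exacts [hxy.ne rfl, hnadj hxy, hnadj hxy.symm, hxy.ne rfl]
  calc localMetricDim G ≤ #(univ \ {u, v}) := localMetricDim_le hgen
    _ = Fintype.card α - 2 := by rw [card_univ_sdiff, hpair]
    _ < Fintype.card α - 1 := by omega

end

theorem stmt1_general {α : Type*} [Fintype α] (G : SimpleGraph α) :
    localMetricDim G = Fintype.card α - 1 ↔ G = ⊤ := by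
  constructor
  · intro hdim
    by_contra hG
    exact (localMetricDim_lt_card_sub_one_of_ne_top hG).ne hdim
  · rintro rfl
    exact localMetricDim_top

/-- For a nontrivial connected graph `G` of order `n`, `dim_l G = n - 1` iff
`G` is the complete graph. -/
theorem stmt1 {α : Type*} [Fintype α] (G : SimpleGraph α) (hG : G.Connected)
    (hnt : Nontrivial α) :
    localMetricDim G = Fintype.card α - 1 ↔ G = ⊤ :=
  stmt1_general G
end

section
/- For any connected graph G of order n ≥ 2 and any integer t ≥ 2, dim_l(G ⊙ K_t) = n(t − 1). -/
open SimpleGraph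

/-!
The vertices `(a, i)` of the copy of `K_t` attached to `a` are pairwise adjacent twins, so no
other vertex tells two of them apart: a local metric generator misses at most one of them per
copy, whence `dim_l ≥ n (t - 1)`. Conversely, the vertices `(a, i)` with `i ≠ 0` form a local
metric generator. An edge `a — b` of `G` is resolved by `(a, 1)`, and every other edge except
`a — (a, 0)` has an endpoint in the set. That last edge is resolved by `(c, 1)` for any `c ≠ a`,
since `(c, 1)` reaches `(a, 0)` only through the cut vertex `a`.
-/

namespace SimpleGraph

variable {V : Type*} {H : SimpleGraph V}

theorem Connected.dist_lt_dist_of_separates (hH : H.Connected) {B : Set V} {x y v : V}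
    (hsep : ∀ u ∉ B, ∀ w ∈ B, H.Adj u w → u = x) (hy : y ∈ B) (hv : v ∉ B) :
    H.dist v x < H.dist v y := by
  suffices ∀ {u} (p : H.Walk u y), u ∉ B → H.dist u x < p.length by
    obtain ⟨p, hp⟩ := (hH v y).exists_walk_length_eq_dist
    exact hp ▸ this p hv
  intro u p hu
  induction p with
  | nil => exact absurd hy hu
  | @cons u w _ huw p ih =>
    rw [Walk.length_cons]
    by_cases hw : w ∈ B
    · rw [hsep u hu w hw huw, dist_self]
      omega
    · have htri := hH.dist_triangle (u := u) (v := w) (w := x)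
      rw [dist_eq_one_iff_adj.mpr huw] at htri
      have := ih hy hw
      omega

theorem Connected.dist_le_dist_of_adj_imp_adj (hH : H.Connected) {x y v : V}
    (hxy : ∀ z, H.Adj y z → z ≠ x → H.Adj x z) (hv : v ≠ y) :
    H.dist x v ≤ H.dist y v := by
  obtain ⟨p, hp⟩ := (hH y v).exists_walk_length_eq_dist
  cases p with
  | nil => exact absurd rfl hv
  | @cons _ z _ hyz p =>
    rw [← hp, Walk.length_cons]
    by_cases hzx : z = x
    · subst hzx
      have := dist_le p
      omega
    · have htri := hH.dist_triangle (u := x) (v := z) (w := v)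
      rw [dist_eq_one_iff_adj.mpr (hxy z hyz hzx)] at htri
      have := dist_le p
      omega

theorem Connected.dist_eq_dist_of_twins (hH : H.Connected) {x y v : V}
    (hxy : ∀ z, z ≠ x → z ≠ y → (H.Adj x z ↔ H.Adj y z)) (hvx : v ≠ x) (hvy : v ≠ y) :
    H.dist v x = H.dist v y := by
  rw [dist_comm, dist_comm (u := v)]
  exact le_antisymm
    (hH.dist_le_dist_of_adj_imp_adj (fun z hz hzx => (hxy z hzx hz.ne').mpr hz) hvy)
    (hH.dist_le_dist_of_adj_imp_adj (fun z hz hzy => (hxy z hz.ne' hzy).mp hz) hvx)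

end SimpleGraph

section Corona

variable {α β : Type*} {G : SimpleGraph α} {H : SimpleGraph β}

@[simp]
theorem corona_adj_inl_inl {a b : α} : (corona G H).Adj (.inl a) (.inl b) ↔ G.Adj a b := by
  simp only [corona, fromRel_adj, ne_eq, Sum.inl.injEq]
  exact ⟨fun ⟨_, h⟩ => h.elim id .symm, fun h => ⟨h.ne, .inl h⟩⟩

@[simp]
theorem corona_adj_inl_inr {a : α} {p : α × β} : (corona G H).Adj (.inl a) (.inr p) ↔ a = p.1 := by
  simp [corona]

@[simp]
theorem corona_adj_inr_inl {a : α} {p : α × β} : (corona G H).Adj (.inr p) (.inl a) ↔ a = p.1 := by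
  simp [corona]

@[simp]
theorem corona_adj_inr_inr {p q : α × β} :
    (corona G H).Adj (.inr p) (.inr q) ↔ p.1 = q.1 ∧ H.Adj p.2 q.2 := by
  simp only [corona, fromRel_adj, ne_eq]
  refine ⟨fun ⟨_, h⟩ => h.elim id fun h => ⟨h.1.symm, h.2.symm⟩, fun h => ⟨?_, .inl h⟩⟩
  exact fun hpq => h.2.ne (congrArg Prod.snd (Sum.inr_injective hpq))

theorem connected_corona (hG : G.Connected) : (corona G H).Connected := by
  obtain ⟨a₀⟩ := hG.nonempty
  have hinl : ∀ b, (corona G H).Reachable (.inl a₀) (.inl b) := fun b =>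
    (hG a₀ b).map ⟨Sum.inl, corona_adj_inl_inl.mpr⟩
  refine (connected_iff_exists_forall_reachable _).mpr ⟨.inl a₀, ?_⟩
  rintro (b | p)
  · exact hinl b
  · exact (hinl p.1).trans (corona_adj_inl_inr.mpr rfl).reachable

theorem corona_dist_lt_dist_inr (hG : G.Connected) {a : α} {v : α ⊕ α × β}
    (hv : ∀ i, v ≠ .inr (a, i)) (i : β) :
    (corona G H).dist v (.inl a) < (corona G H).dist v (.inr (a, i)) := by
  refine (connected_corona hG).dist_lt_dist_of_separates (B := Set.range fun j => .inr (a, j))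
    ?_ ⟨i, rfl⟩ ?_
  · rintro (b | p) hu _ ⟨j, rfl⟩ h
    · rw [corona_adj_inl_inr.mp h]
    · have hpa : p.1 = a := (corona_adj_inr_inr.mp h).1
      exact absurd ⟨p.2, by rw [← hpa]⟩ hu
  · rintro ⟨j, rfl⟩
    exact hv j rfl

theorem corona_top_dist_inr_eq (hG : G.Connected) {a : α} {i j : β} {v : α ⊕ α × β}
    (hvi : v ≠ .inr (a, i)) (hvj : v ≠ .inr (a, j)) :
    (corona G (⊤ : SimpleGraph β)).dist v (.inr (a, i)) =
      (corona G (⊤ : SimpleGraph β)).dist v (.inr (a, j)) := by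
  refine (connected_corona hG).dist_eq_dist_of_twins (fun z hzi hzj => ?_) hvi hvj
  rcases z with b | ⟨b, k⟩
  · simp
  · simp only [ne_eq, Sum.inr.injEq, Prod.mk.injEq] at hzi hzj
    simp only [corona_adj_inr_inr, top_adj]
    grind

variable [Fintype α] [Fintype β]

theorem card_le_of_isLocalMetricGenerator_corona_top (hG : G.Connected) {T : Finset (α ⊕ α × β)}
    (hT : IsLocalMetricGenerator (corona G (⊤ : SimpleGraph β)) T) :
    Fintype.card α * (Fintype.card β - 1) ≤ T.card := by
  classical
  set M := Finset.univ.filter fun p : α × β => .inr p ∉ T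
  have hM : Set.InjOn Prod.fst (M : Set (α × β)) := by
    rintro ⟨a, i⟩ hi ⟨b, j⟩ hj (rfl : a = b)
    obtain rfl | hij := eq_or_ne i j
    · rfl
    simp only [M, Finset.coe_filter, Finset.mem_univ, true_and, Set.mem_ofPred_eq] at hi hj
    obtain ⟨v, hvT, hv⟩ := hT (.inr (a, i)) (.inr (a, j)) (corona_adj_inr_inr.mpr ⟨rfl, hij⟩)
    refine (hv (corona_top_dist_inr_eq hG ?_ ?_)).elim <;> rintro rfl
    exacts [hi hvT, hj hvT]
  have hMcard : M.card ≤ Fintype.card α :=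
    Finset.card_le_card_of_injOn Prod.fst (fun _ _ => Finset.mem_coe.2 (Finset.mem_univ _)) hM
  have hcompl : Mᶜ.card ≤ T.card :=
    Finset.card_le_card_of_injOn Sum.inr (fun p hp => by simpa [M] using hp) Sum.inr_injective.injOn
  rw [Finset.card_compl, Fintype.card_prod] at hcompl
  rw [Nat.mul_sub_one]
  omega

variable [DecidableEq β]

def coronaCopiesWithout (i₀ : β) : Finset (α ⊕ α × β) :=
  (Finset.univ ×ˢ {i₀}ᶜ).map Function.Embedding.inr

@[simp]
theorem inr_mem_coronaCopiesWithout {i₀ : β} {p : α × β} :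
    .inr p ∈ coronaCopiesWithout i₀ ↔ p.2 ≠ i₀ := by
  simp [coronaCopiesWithout]

theorem card_coronaCopiesWithout (i₀ : β) :
    (coronaCopiesWithout (α := α) i₀).card = Fintype.card α * (Fintype.card β - 1) := by
  simp [coronaCopiesWithout, Finset.card_compl]

theorem isLocalMetricGenerator_coronaCopiesWithout [Nontrivial α] [Nontrivial β]
    (hG : G.Connected) (i₀ : β) :
    IsLocalMetricGenerator (corona G (⊤ : SimpleGraph β))
      (coronaCopiesWithout (α := α) i₀ : Set (α ⊕ α × β)) := by
  set C := corona G (⊤ : SimpleGraph β)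
  have hself : ∀ {x y}, C.Adj x y → C.dist x x ≠ C.dist x y := fun h => by
    rw [dist_self, dist_eq_one_iff_adj.mpr h]
    omega
  obtain ⟨i₁, hi₁⟩ := exists_ne i₀
  have hinl_inr : ∀ a j, ∃ v ∈ coronaCopiesWithout i₀,
      C.dist v (.inl a) ≠ C.dist v (.inr (a, j)) := by
    intro a j
    by_cases hj : j = i₀
    · obtain ⟨c, hc⟩ := exists_ne a
      exact ⟨.inr (c, i₁), by simpa, (corona_dist_lt_dist_inr hG (by simp [hc]) j).ne⟩
    · exact ⟨.inr (a, j), by simpa, (hself (corona_adj_inr_inl.mpr rfl)).symm⟩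
  rintro (a | ⟨a, i⟩) (b | ⟨b, j⟩) h
  · refine ⟨.inr (a, i₁), by simpa, fun hab => ?_⟩
    rw [dist_eq_one_iff_adj.mpr (corona_adj_inr_inl.mpr rfl), eq_comm, dist_eq_one_iff_adj,
      corona_adj_inr_inl] at hab
    exact (corona_adj_inl_inl.mp h).ne hab.symm
  · obtain rfl : a = b := corona_adj_inl_inr.mp h
    exact hinl_inr a j
  · obtain rfl : b = a := corona_adj_inr_inl.mp h
    obtain ⟨v, hv, hne⟩ := hinl_inr b i
    exact ⟨v, hv, hne.symm⟩
  · by_cases hi : i = i₀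
    · refine ⟨.inr (b, j), ?_, (hself h.symm).symm⟩
      simpa [← hi] using ((corona_adj_inr_inr.mp h).2).symm
    · exact ⟨.inr (a, i), by simpa, hself h⟩

end Corona

theorem localMetricDim_eq_card {α : Type*} {G : SimpleGraph α} {S : Finset α}
    (hS : IsLocalMetricGenerator G S)
    (hmin : ∀ T : Finset α, IsLocalMetricGenerator G T → S.card ≤ T.card) :
    localMetricDim G = S.card :=
  le_antisymm (Nat.sInf_le ⟨S, rfl, hS⟩)
    (le_csInf ⟨_, S, rfl, hS⟩ fun _ ⟨T, hT, hTgen⟩ => hT ▸ hmin T hTgen)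

/-- For connected `G` of order `n ≥ 2` and `t ≥ 2`,
`dim_l (G ⊙ K_t) = n (t - 1)`. -/
theorem stmt6 {α : Type*} [Fintype α] (G : SimpleGraph α) (hG : G.Connected)
    (hn : 2 ≤ Fintype.card α) (t : ℕ) (ht : 2 ≤ t) :
    localMetricDim (corona G (⊤ : SimpleGraph (Fin t))) = Fintype.card α * (t - 1) := by
  have : Nontrivial α := Fintype.one_lt_card_iff_nontrivial.mp hn
  have : Nontrivial (Fin t) := Fin.nontrivial_iff_two_le.mpr ht
  have hS := isLocalMetricGenerator_coronaCopiesWithout hG (⟨0, by omega⟩ : Fin t)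
  rw [localMetricDim_eq_card hS, card_coronaCopiesWithout, Fintype.card_fin]
  intro T hT
  rw [card_coronaCopiesWithout]
  exact card_le_of_isLocalMetricGenerator_corona_top hG hT
end

section
/- For t = 4k + r with 0 ≤ r ≤ 3 and t ≥ 6, the local metric dimension of the wheel-like join K_1 + P_t equals k if r ∈ {0,1} and k+1 if r ∈ {2,3}. -/
open SimpleGraph

/-!
Every rim vertex is adjacent to the hub, so all distances in `K₁ + P_t` are `0`, `1` or `2`.
Hence the hub separates no rim edge, and the rim vertex `j` separates the rim edge
`{i, i + 1}` only when `j - 2 ≤ i ≤ j + 1`: one landmark covers at most four of the `t - 1`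
rim edges, giving `dim_l ≥ ⌈(t - 1) / 4⌉ = ⌊(t + 2) / 4⌋`. Conversely the landmarks
`2, 6, 10, …` (the last one moved to `t - 1` if it falls off the path) separate every rim edge,
and for `t ≥ 6` the first two landmarks together separate every hub edge.
-/

namespace SimpleGraph

lemma dist_eq_two_of_forall_adj {α : Type*} {G : SimpleGraph α} (c : α)
    (hc : ∀ v, v ≠ c → G.Adj c v) {x y : α} (hxy : x ≠ y) (hadj : ¬ G.Adj x y) :
    G.dist x y = 2 := by
  have hxc : x ≠ c := fun h => hadj (h ▸ hc y fun hyc => hxy (h.trans hyc.symm))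
  have hyc : y ≠ c := fun h => hadj (h ▸ (hc x hxc).symm)
  let p : G.Walk x y := .cons (hc x hxc).symm (.cons (hc y hyc) .nil)
  have hle : G.dist x y ≤ 2 := dist_le p
  have hpos : 0 < G.dist x y := Reachable.pos_dist_of_ne ⟨p⟩ hxy
  have hne : G.dist x y ≠ 1 := fun h => hadj (dist_eq_one_iff_adj.mp h)
  omega

lemma localMetricDim_eq_of_le_card {α : Type*} {G : SimpleGraph α} {n : ℕ}
    (hgen : ∃ S : Finset α, S.card = n ∧ IsLocalMetricGenerator G ↑S)
    (hle : ∀ S : Finset α, IsLocalMetricGenerator G ↑S → n ≤ S.card) :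
    localMetricDim G = n := by
  refine le_antisymm (Nat.sInf_le hgen) (le_csInf ⟨n, hgen⟩ ?_)
  rintro m ⟨S, rfl, hS⟩
  exact hle S hS

section Join

variable {β : Type*} (H : SimpleGraph β)

@[simp]
lemma joinK1_adj_none_some (b : β) : (joinK1 H).Adj none (some b) := by
  simp [joinK1]

@[simp]
lemma joinK1_adj_some_some {a b : β} : (joinK1 H).Adj (some a) (some b) ↔ H.Adj a b := by
  simp only [joinK1, fromRel_adj, ne_eq, Option.some.injEq]
  exact ⟨fun h => h.2.elim id .symm, fun h => ⟨h.ne, .inl h⟩⟩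

lemma joinK1_dist_of_not_adj {x y : Option β} (hxy : x ≠ y) (hadj : ¬ (joinK1 H).Adj x y) :
    (joinK1 H).dist x y = 2 :=
  dist_eq_two_of_forall_adj none (fun v hv => by
    obtain ⟨b, rfl⟩ := Option.ne_none_iff_exists'.mp hv
    exact joinK1_adj_none_some H b) hxy hadj

lemma joinK1_dist_none_some (b : β) : (joinK1 H).dist none (some b) = 1 :=
  dist_eq_one_iff_adj.mpr (joinK1_adj_none_some H b)

lemma joinK1_dist_some_none (b : β) : (joinK1 H).dist (some b) none = 1 :=
  dist_eq_one_iff_adj.mpr (joinK1_adj_none_some H b).symm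

lemma isLocalMetricGenerator_joinK1 {S : Set (Option β)}
    (hrim : ∀ a b, H.Adj a b → ∃ v ∈ S, (joinK1 H).dist v (some a) ≠ (joinK1 H).dist v (some b))
    (hhub : ∀ b, ∃ v ∈ S, (joinK1 H).dist v none ≠ (joinK1 H).dist v (some b)) :
    IsLocalMetricGenerator (joinK1 H) S := by
  rintro (_ | a) (_ | b) hadj
  · exact absurd rfl hadj.ne
  · exact hhub b
  · obtain ⟨v, hv, hne⟩ := hhub a
    exact ⟨v, hv, hne.symm⟩
  · exact hrim a b ((joinK1_adj_some_some H).mp hadj)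

end Join

section Fan

variable {t : ℕ}

lemma fan_dist_some_some (i j : Fin t) :
    (joinK1 (pathGraph t)).dist (some i) (some j) =
      if i.val = j.val then 0 else if i.val + 1 = j.val ∨ j.val + 1 = i.val then 1 else 2 := by
  have hadj : (joinK1 (pathGraph t)).Adj (some i) (some j) ↔
      i.val + 1 = j.val ∨ j.val + 1 = i.val := by
    rw [joinK1_adj_some_some, pathGraph_adj]
  split_ifs with hij h
  · rw [Fin.ext hij, dist_self]
  · exact dist_eq_one_iff_adj.mpr (hadj.mpr h)
  · exact joinK1_dist_of_not_adj _ (by simpa [Fin.ext_iff] using hij) (hadj.not.mpr h)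

lemma fan_separates_rim_edge {i : ℕ} (hi : i + 1 < t) {v : Option (Fin t)}
    (hv : (joinK1 (pathGraph t)).dist v (some ⟨i, by omega⟩) ≠
      (joinK1 (pathGraph t)).dist v (some ⟨i + 1, hi⟩)) :
    ∃ j : Fin t, v = some j ∧ i ≤ j.val + 1 ∧ j.val ≤ i + 2 := by
  obtain _ | j := v
  · simp [joinK1_dist_none_some] at hv
  · refine ⟨j, rfl, ?_⟩
    simp only [fan_dist_some_some] at hv
    split_ifs at hv <;> omega

lemma fan_card_le_of_isLocalMetricGenerator (S : Finset (Option (Fin t)))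
    (hS : IsLocalMetricGenerator (joinK1 (pathGraph t)) ↑S) :
    (t + 2) / 4 ≤ S.card := by
  let cover : Option (Fin t) → Finset ℕ := fun v =>
    v.elim ∅ fun j => Finset.Icc (j.val - 2) (j.val + 1)
  have hsub : Finset.range (t - 1) ⊆ S.biUnion cover := by
    intro i hi
    have hi₁ : i + 1 < t := by rw [Finset.mem_range] at hi; omega
    obtain ⟨v, hvS, hv⟩ := hS (some ⟨i, by omega⟩) (some ⟨i + 1, hi₁⟩)
      ((joinK1_adj_some_some _).mpr (pathGraph_adj.mpr (.inl rfl)))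
    obtain ⟨j, rfl, hij⟩ := fan_separates_rim_edge hi₁ hv
    exact Finset.mem_biUnion.mpr ⟨some j, hvS, Finset.mem_Icc.mpr (by omega)⟩
  have hcover : ∀ v ∈ S, (cover v).card ≤ 4 := by
    rintro (_ | j) -
    · simp [cover]
    · simp only [cover, Option.elim, Nat.card_Icc]
      omega
  have : t - 1 ≤ S.card * 4 :=
    calc t - 1 = (Finset.range (t - 1)).card := (Finset.card_range _).symm
      _ ≤ (S.biUnion cover).card := Finset.card_le_card hsub
      _ ≤ S.card * 4 := Finset.card_biUnion_le_card_mul S cover 4 hcover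
  omega

lemma fan_exists_isLocalMetricGenerator (ht : 6 ≤ t) :
    ∃ S : Finset (Option (Fin t)), S.card = (t + 2) / 4 ∧
      IsLocalMetricGenerator (joinK1 (pathGraph t)) ↑S := by
  let landmark : ℕ → Option (Fin t) := fun m => some ⟨min (4 * m + 2) (t - 1), by omega⟩
  let S := (Finset.range ((t + 2) / 4)).image landmark
  have hmem : ∀ m < (t + 2) / 4, landmark m ∈ S := fun m hm =>
    Finset.mem_image_of_mem landmark (Finset.mem_range.mpr hm)
  refine ⟨S, ?_, isLocalMetricGenerator_joinK1 _ ?_ ?_⟩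
  · refine (Finset.card_image_of_injOn ?_).trans (Finset.card_range _)
    intro m₁ h₁ m₂ h₂ h
    simp only [Finset.coe_range, Set.mem_Iio, landmark, Option.some.injEq, Fin.mk.injEq] at h₁ h₂ h
    omega
  · -- the rim edge `{i, i + 1}` is separated by the landmark of its block of four
    suffices ∀ a b : Fin t, a.val + 1 = b.val → ∃ v ∈ (↑S : Set _),
        (joinK1 (pathGraph t)).dist v (some a) ≠ (joinK1 (pathGraph t)).dist v (some b) by
      intro a b hab
      rcases pathGraph_adj.mp hab with h | h
      · exact this a b h
      · obtain ⟨v, hv, hne⟩ := this b a h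
        exact ⟨v, hv, hne.symm⟩
    intro a b hab
    refine ⟨landmark (a.val / 4), hmem _ (by omega), ?_⟩
    simp only [landmark, fan_dist_some_some]
    split_ifs <;> omega
  · intro b
    -- landmark `2` is at distance `1` from the hub but `≠ 1` from `b`, unless `b ∈ {1, 3}`
    obtain ⟨m, hm, hb⟩ : ∃ m < (t + 2) / 4, m = if b.val = 1 ∨ b.val = 3 then 1 else 0 :=
      ⟨_, by split_ifs <;> omega, rfl⟩
    refine ⟨landmark m, hmem m hm, ?_⟩
    simp only [landmark, joinK1_dist_some_none, fan_dist_some_some]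
    split_ifs at hb ⊢ <;> omega

lemma localMetricDim_fan (ht : 6 ≤ t) :
    localMetricDim (joinK1 (pathGraph t)) = (t + 2) / 4 :=
  localMetricDim_eq_of_le_card (fan_exists_isLocalMetricGenerator ht)
    fan_card_le_of_isLocalMetricGenerator

end Fan

end SimpleGraph

/-- For `t = 4k + r`, `0 ≤ r ≤ 3`, `t ≥ 6`,
`dim_l (K₁ + P_t) = k` if `r ∈ {0,1}` and `k + 1` if `r ∈ {2,3}`. -/
theorem stmt10 (k r t : ℕ) (htk : t = 4 * k + r) (hr : r ≤ 3) (ht : 6 ≤ t) :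
    localMetricDim (joinK1 (SimpleGraph.pathGraph t)) = if r ≤ 1 then k else k + 1 := by
  rw [SimpleGraph.localMetricDim_fan ht]
  split_ifs <;> omega
end
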